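/- arXiv:2106.05242 — 2 statements merged into one kernel-verified Lean document; each statement's English description precedes it below -/
import Mathlib

section
/- Let ρ ∈ (0,1), and let L₁, L₂ be independent nonnegative random variables with survival functions P(L₁ > h) = (1+(1−ρ)ρh)e^{−(1−ρ)h} and P(L₂ > h) = (1+ρh)e^{−ρh}. Then P(L₁ > L₂) = ρ²(1+2ρ−2ρ²). -/
/-!
`L₁` has density `(1-ρ)²(1+ρt)e^{-(1-ρ)t}` on `[0, ∞)`, the negative derivative of its survival
function, so by Tonelli `P(L₁ > L₂) = ∫₀^∞ f_{L₁}(t) P(L₂ ≤ t) dt`. The integrand is a combination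
of `t^k e^{-(1-ρ)t}` and `t^k e^{-t}` with `k ≤ 2`, and an explicit antiderivative of the same shape
evaluates the integral to `1 - (1-ρ)²(1+2ρ+2ρ²) = ρ²(1+2ρ-2ρ²)`.
-/

open MeasureTheory Set Filter Real Topology
open scoped ENNReal

section QuadraticMulExp

variable (p q r : ℝ)

lemma hasDerivAt_quadratic_mul_exp (b t : ℝ) :
    HasDerivAt (fun t ↦ (p + q * t + r * t ^ 2) * exp (-b * t))
      ((q + 2 * r * t - b * (p + q * t + r * t ^ 2)) * exp (-b * t)) t := by
  have hlin : HasDerivAt (fun t ↦ p + q * t) q t := by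
    simpa using ((hasDerivAt_id t).const_mul q).const_add p
  have hpoly : HasDerivAt (fun t ↦ p + q * t + r * t ^ 2) (q + r * (2 * t)) t :=
    hlin.add (by simpa using (hasDerivAt_pow 2 t).const_mul r)
  have hexp : HasDerivAt (fun t ↦ exp (-b * t)) (exp (-b * t) * -b) t := by
    simpa using ((hasDerivAt_id t).const_mul (-b)).exp
  exact (hpoly.mul hexp).congr_deriv (by ring)

lemma tendsto_quadratic_mul_exp_atTop {b : ℝ} (hb : 0 < b) :
    Tendsto (fun t ↦ (p + q * t + r * t ^ 2) * exp (-b * t)) atTop (𝓝 0) := by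
  have h := (((tendsto_rpow_mul_exp_neg_mul_atTop_nhds_zero 0 b hb).const_mul p).add
    ((tendsto_rpow_mul_exp_neg_mul_atTop_nhds_zero 1 b hb).const_mul q)).add
    ((tendsto_rpow_mul_exp_neg_mul_atTop_nhds_zero 2 b hb).const_mul r)
  simp only [mul_zero, add_zero, rpow_zero, rpow_one, rpow_two] at h
  exact h.congr fun t ↦ by ring

end QuadraticMulExp

lemma one_add_mul_exp_neg_le_one (a : ℝ) : (1 + a) * exp (-a) ≤ 1 := by
  calc (1 + a) * exp (-a) ≤ exp a * exp (-a) := by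
        gcongr
        linarith [add_one_le_exp a]
    _ = 1 := by rw [← exp_add, add_neg_cancel, exp_zero]

lemma lintegral_Ici_ofReal_eq_of_hasDerivAt {F f : ℝ → ℝ} {a m : ℝ}
    (hderiv : ∀ x ∈ Ici a, HasDerivAt F (f x) x) (hf : ∀ x ∈ Ioi a, 0 ≤ f x)
    (hF : Tendsto F atTop (𝓝 m)) :
    ∫⁻ t in Ici a, ENNReal.ofReal (f t) = ENNReal.ofReal (m - F a) := by
  rw [setLIntegral_congr Ioi_ae_eq_Ici.symm, ← integral_Ioi_of_hasDerivAt_of_nonneg' hderiv hf hF,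
    ofReal_integral_eq_lintegral_ofReal (integrableOn_Ioi_deriv_of_nonneg' hderiv hf hF)
      ((ae_restrict_iff' measurableSet_Ioi).2 (ae_of_all _ hf))]

lemma lintegral_setLIntegral_Ici {μ ν : Measure ℝ} [SFinite μ] [SFinite ν] {f : ℝ → ℝ≥0∞}
    (hf : Measurable f) :
    ∫⁻ y, ∫⁻ t in Ici y, f t ∂ν ∂μ = ∫⁻ t, f t * μ (Iic t) ∂ν := by
  have hswap : Function.uncurry (fun y t ↦ (Ici y).indicator f t) =
      {p : ℝ × ℝ | p.1 ≤ p.2}.indicator (f ∘ Prod.snd) := by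
    ext ⟨y, t⟩
    by_cases h : y ≤ t <;> simp [indicator, h]
  have hinner : ∀ t, ∫⁻ y, (Ici y).indicator f t ∂μ = f t * μ (Iic t) := fun t ↦ by
    rw [← setLIntegral_const, ← lintegral_indicator measurableSet_Iic]
    rfl
  simp_rw [← lintegral_indicator measurableSet_Ici]
  rw [lintegral_lintegral_swap]
  · simp_rw [hinner]
  · rw [hswap]
    exact ((hf.comp measurable_snd).indicator
      (measurableSet_le measurable_fst measurable_snd)).aemeasurable

theorem prod_setOf_snd_lt_fst_eq_lintegral_mul_measure_Iic {μ₁ μ₂ : Measure ℝ} [SFinite μ₁]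
    [SFinite μ₂] {f : ℝ → ℝ≥0∞} (hf : Measurable f) (h₂neg : μ₂ (Iio 0) = 0)
    (h₁ : ∀ y, 0 ≤ y → μ₁ (Ioi y) = ∫⁻ t in Ici y, f t) :
    (μ₁.prod μ₂) {p | p.2 < p.1} = ∫⁻ t in Ici 0, f t * μ₂ (Iic t) := by
  have hnonneg : ∀ᵐ y ∂μ₂, 0 ≤ y := by
    simpa [ae_iff, Iio] using h₂neg
  rw [Measure.prod_apply_symm (measurableSet_lt measurable_snd measurable_fst),
    ← lintegral_setLIntegral_Ici hf]
  refine lintegral_congr_ae ?_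
  filter_upwards [hnonneg] with y hy
  rw [Measure.restrict_restrict measurableSet_Ici, Ici_inter_Ici, max_eq_left hy]
  exact h₁ y hy

section Computation

variable {ρ : ℝ}

lemma lintegral_Ici_density_eq_survival (hρ : ρ ∈ Ioo (0 : ℝ) 1) {y : ℝ} (hy : 0 ≤ y) :
    ∫⁻ t in Ici y, ENNReal.ofReal ((1 - ρ) ^ 2 * (1 + ρ * t) * exp (-(1 - ρ) * t)) =
      ENNReal.ofReal ((1 + (1 - ρ) * ρ * y) * exp (-(1 - ρ) * y)) := by
  obtain ⟨hρ0, hρ1⟩ := hρ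
  have hderiv : ∀ t ∈ Ici y,
      HasDerivAt (fun t ↦ (-1 + -((1 - ρ) * ρ) * t + 0 * t ^ 2) * exp (-(1 - ρ) * t))
        ((1 - ρ) ^ 2 * (1 + ρ * t) * exp (-(1 - ρ) * t)) t := fun t _ ↦
    (hasDerivAt_quadratic_mul_exp _ _ _ _ t).congr_deriv (by ring)
  have hf : ∀ t ∈ Ioi y, 0 ≤ (1 - ρ) ^ 2 * (1 + ρ * t) * exp (-(1 - ρ) * t) := fun t ht ↦ by
    have : 0 ≤ t := hy.trans (le_of_lt ht)
    positivity
  rw [lintegral_Ici_ofReal_eq_of_hasDerivAt hderiv hf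
    (tendsto_quadratic_mul_exp_atTop _ _ _ (sub_pos.2 hρ1))]
  congr 1
  ring

lemma lintegral_Ici_zero_density_mul_cdf (hρ : ρ ∈ Ioo (0 : ℝ) 1) :
    ∫⁻ t in Ici 0, ENNReal.ofReal ((1 - ρ) ^ 2 * (1 + ρ * t) * exp (-(1 - ρ) * t) *
        (1 - (1 + ρ * t) * exp (-ρ * t))) =
      ENNReal.ofReal (ρ ^ 2 * (1 + 2 * ρ - 2 * ρ ^ 2)) := by
  obtain ⟨hρ0, hρ1⟩ := hρ
  have hexp : ∀ t, exp (-1 * t) = exp (-(1 - ρ) * t) * exp (-ρ * t) := fun t ↦ by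
    rw [← exp_add]
    ring_nf
  -- the second summand is an antiderivative of `-(1-ρ)²(1+ρt)² e^{-t}`, the density of `L₁` times
  -- the survival function of `L₂`
  have hderiv : ∀ t ∈ Ici 0,
      HasDerivAt (fun t ↦ (-1 + -((1 - ρ) * ρ) * t + 0 * t ^ 2) * exp (-(1 - ρ) * t) +
          ((1 - ρ) ^ 2 * (1 + 2 * ρ + 2 * ρ ^ 2) + (1 - ρ) ^ 2 * (2 * ρ + 2 * ρ ^ 2) * t +
            (1 - ρ) ^ 2 * ρ ^ 2 * t ^ 2) * exp (-1 * t))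
        ((1 - ρ) ^ 2 * (1 + ρ * t) * exp (-(1 - ρ) * t) *
          (1 - (1 + ρ * t) * exp (-ρ * t))) t := fun t _ ↦ by
    refine ((hasDerivAt_quadratic_mul_exp _ _ _ _ t).add
      (hasDerivAt_quadratic_mul_exp _ _ _ _ t)).congr_deriv ?_
    rw [hexp]
    ring
  have hf : ∀ t ∈ Ioi (0 : ℝ), 0 ≤ (1 - ρ) ^ 2 * (1 + ρ * t) * exp (-(1 - ρ) * t) *
      (1 - (1 + ρ * t) * exp (-ρ * t)) := fun t (ht : 0 < t) ↦ by
    have hS₂ : (1 + ρ * t) * exp (-ρ * t) ≤ 1 := by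
      simpa only [neg_mul] using one_add_mul_exp_neg_le_one (ρ * t)
    have := sub_nonneg.2 hS₂
    positivity
  rw [lintegral_Ici_ofReal_eq_of_hasDerivAt (m := 0) hderiv hf (by
    simpa only [add_zero] using (tendsto_quadratic_mul_exp_atTop _ _ _ (sub_pos.2 hρ1)).add
      (tendsto_quadratic_mul_exp_atTop _ _ _ one_pos))]
  congr 1
  simp only [mul_zero, exp_zero]
  ring

end Computation

theorem stmt_7_general (ρ : ℝ) (hρ : ρ ∈ Set.Ioo (0:ℝ) 1)
    (μ₁ μ₂ : Measure ℝ) [IsProbabilityMeasure μ₁] [IsProbabilityMeasure μ₂]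
    (h₂neg : μ₂ (Set.Iio 0) = 0)
    (h₁ : ∀ x : ℝ, 0 ≤ x →
      μ₁ (Set.Ioi x) = ENNReal.ofReal ((1 + (1 - ρ) * ρ * x) * Real.exp (-(1 - ρ) * x)))
    (h₂ : ∀ x : ℝ, 0 ≤ x →
      μ₂ (Set.Ioi x) = ENNReal.ofReal ((1 + ρ * x) * Real.exp (-ρ * x))) :
    (μ₁.prod μ₂) {p : ℝ × ℝ | p.2 < p.1} =
      ENNReal.ofReal (ρ ^ 2 * (1 + 2 * ρ - 2 * ρ ^ 2)) := by
  rw [prod_setOf_snd_lt_fst_eq_lintegral_mul_measure_Iic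
      (f := fun t ↦ ENNReal.ofReal ((1 - ρ) ^ 2 * (1 + ρ * t) * exp (-(1 - ρ) * t)))
      (by fun_prop) h₂neg fun y hy ↦ by rw [h₁ y hy, lintegral_Ici_density_eq_survival hρ hy],
    ← lintegral_Ici_zero_density_mul_cdf hρ]
  refine setLIntegral_congr_fun measurableSet_Ici fun t (ht : 0 ≤ t) ↦ ?_
  have hS₂ : 0 ≤ (1 + ρ * t) * exp (-ρ * t) := by
    have := hρ.1.le; positivity
  have hf : 0 ≤ (1 - ρ) ^ 2 * (1 + ρ * t) * exp (-(1 - ρ) * t) := by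
    have := hρ.1.le; positivity
  rw [← compl_Ioi, prob_compl_eq_one_sub measurableSet_Ioi, h₂ t ht, ← ENNReal.ofReal_one,
    ← ENNReal.ofReal_sub _ hS₂, ← ENNReal.ofReal_mul hf]

/-- If L₁, L₂ are independent nonnegative random variables with the given
survival functions, then P(L₁ > L₂) = ρ²(1+2ρ-2ρ²). -/
theorem stmt_7 (ρ : ℝ) (hρ : ρ ∈ Set.Ioo (0:ℝ) 1)
    (μ₁ μ₂ : Measure ℝ) [IsProbabilityMeasure μ₁] [IsProbabilityMeasure μ₂]
    (h₁neg : μ₁ (Set.Iio 0) = 0) (h₂neg : μ₂ (Set.Iio 0) = 0)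
    (h₁ : ∀ x : ℝ, 0 ≤ x →
      μ₁ (Set.Ioi x) = ENNReal.ofReal ((1 + (1 - ρ) * ρ * x) * Real.exp (-(1 - ρ) * x)))
    (h₂ : ∀ x : ℝ, 0 ≤ x →
      μ₂ (Set.Ioi x) = ENNReal.ofReal ((1 + ρ * x) * Real.exp (-ρ * x))) :
    (μ₁.prod μ₂) {p : ℝ × ℝ | p.2 < p.1} =
      ENNReal.ofReal (ρ ^ 2 * (1 + 2 * ρ - 2 * ρ ^ 2)) :=
  stmt_7_general ρ hρ μ₁ μ₂ h₂neg h₁ h₂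
end

section
/- Fix ρ ∈ (0,1) and x ≥ 0. For integer sequences r₁(0..x), r₂(0..x) with r₁(0)=r₂(0)=0, increments in {0,1}, and r₁(y) ≥ r₂(y) for all y, suppose the joint probability P[(R̄₁,R̄₂) follows (r₁,r₂) on {0,...,x} and E(x)=h] = ρ^{r₁(x)+r₂(x)}(1−ρ)^{2x−r₁(x)−r₂(x)} for every admissible 0 ≤ h ≤ r₁(x)−r₂(x). Then summing over h gives P[(R̄₁,R̄₂) follows (r₁,r₂)] = (r₁(x)−r₂(x)+1)·ρ^{r₁(x)+r₂(x)}(1−ρ)^{2x−r₁(x)−r₂(x)}, and consequently the conditional one-step transition probability from (r₁(x),r₂(x)) to (r₁(x+1),r₂(x+1)) equals ((r₁(x+1)−r₂(x+1)+1)/(r₁(x)−r₂(x)+1))·ρ^{y₁+y₂}(1−ρ)^{2−y₁−y₂}, where y_i = r_i(x+1)−r_i(x). -/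
/-- From the joint formula P[(R̄₁,R̄₂) follows (r₁,r₂) on {0,…,y}, E(y)=h]
= ρ^{r₁(y)+r₂(y)}(1-ρ)^{2y-r₁(y)-r₂(y)} for 0 ≤ h ≤ r₁(y)-r₂(y), one deduces
the marginal path probability and the Markov transition probability. -/
theorem stmt_12 (ρ : ℝ) (hρ : ρ ∈ Set.Ioo (0:ℝ) 1) (x : ℕ) (r₁ r₂ : ℕ → ℕ)
    (h10 : r₁ 0 = 0) (h20 : r₂ 0 = 0)
    (hinc1 : ∀ y, r₁ (y + 1) = r₁ y ∨ r₁ (y + 1) = r₁ y + 1)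
    (hinc2 : ∀ y, r₂ (y + 1) = r₂ y ∨ r₂ (y + 1) = r₂ y + 1)
    (hge : ∀ y, r₂ y ≤ r₁ y)
    (J : ℕ → ℕ → ℝ)
    (hJ : ∀ y, ∀ h ≤ r₁ y - r₂ y,
      J y h = ρ ^ (r₁ y + r₂ y) * (1 - ρ) ^ (2 * y - (r₁ y + r₂ y)))
    (Pev : ℕ → ℝ)
    (hPev : ∀ y, Pev y = ∑ h ∈ Finset.range (r₁ y - r₂ y + 1), J y h) :
    Pev x = ((r₁ x - r₂ x : ℕ) + 1 : ℝ) * ρ ^ (r₁ x + r₂ x)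
        * (1 - ρ) ^ (2 * x - (r₁ x + r₂ x)) ∧
    Pev (x + 1) / Pev x
      = (((r₁ (x + 1) - r₂ (x + 1) : ℕ) + 1 : ℝ) / ((r₁ x - r₂ x : ℕ) + 1))
        * ρ ^ ((r₁ (x + 1) - r₁ x) + (r₂ (x + 1) - r₂ x))
        * (1 - ρ) ^ (2 - ((r₁ (x + 1) - r₁ x) + (r₂ (x + 1) - r₂ x))) := by
  obtain ⟨hρ0, hρ1⟩ := hρ
  have hρne : ρ ≠ 0 := ne_of_gt hρ0
  have h1ρ : (0:ℝ) < 1 - ρ := by linarith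
  have h1ρne : (1 - ρ) ≠ 0 := ne_of_gt h1ρ
  -- closed formula for Pev
  have key : ∀ y, Pev y = ((r₁ y - r₂ y : ℕ) + 1 : ℝ) * ρ ^ (r₁ y + r₂ y)
      * (1 - ρ) ^ (2 * y - (r₁ y + r₂ y)) := by
    intro y
    rw [hPev y]
    rw [Finset.sum_congr rfl (fun h hh => hJ y h (by
      simpa [Nat.lt_succ_iff] using Finset.mem_range.mp hh))]
    rw [Finset.sum_const, Finset.card_range]
    push_cast
    ring
  -- sum bound
  have hbnd : ∀ y, r₁ y + r₂ y ≤ 2 * y := by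
    intro y
    induction y with
    | zero => simp [h10, h20]
    | succ n ih =>
      rcases hinc1 n with h1 | h1 <;> rcases hinc2 n with h2 | h2 <;>
        rw [h1, h2] <;> omega
  have hm1 : r₁ x ≤ r₁ (x + 1) := by rcases hinc1 x with h | h <;> omega
  have hm2 : r₂ x ≤ r₂ (x + 1) := by rcases hinc2 x with h | h <;> omega
  refine ⟨key x, ?_⟩
  rw [key x, key (x + 1)]
  have e1 : r₁ (x + 1) + r₂ (x + 1)
      = (r₁ x + r₂ x) + ((r₁ (x + 1) - r₁ x) + (r₂ (x + 1) - r₂ x)) := by omega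
  have hd2 : (r₁ (x + 1) - r₁ x) + (r₂ (x + 1) - r₂ x) ≤ 2 := by
    rcases hinc1 x with h1 | h1 <;> rcases hinc2 x with h2 | h2 <;> omega
  have e2 : 2 * (x + 1) - (r₁ (x + 1) + r₂ (x + 1))
      = (2 * x - (r₁ x + r₂ x)) + (2 - ((r₁ (x + 1) - r₁ x) + (r₂ (x + 1) - r₂ x))) := by
    have := hbnd x
    omega
  rw [e2, e1, pow_add, pow_add]
  have hnne : ((r₁ x - r₂ x : ℕ) + 1 : ℝ) ≠ 0 := by positivity
  field_simp
  ring
end
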